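/- Let $V$ be a finite-dimensional symplectic vector space over a field $F$ and $h \in Sp(V)$ an isometry of $V$. If $h$ stabilizes no nonzero proper isotropic subspace of $V$ and stabilizes no nontrivial orthogonal direct sum decomposition $V = V_1 \oplus V_2$ into symplectic subspaces, then $h$ is semisimple and $F[h] \subseteq \mathrm{End}_F(V)$ is a field. -/

import Mathlib

/-!
If `W` is `h`-invariant then so is `W ⊓ Wᗮ`, which is isotropic and therefore zero; hence
`V = W ⊕ Wᗮ` is an `h`-stable orthogonal decomposition into symplectic subspaces, and `W = 0` or
`W = V`. So `h` acts irreducibly. Every element of `F[h]` commutes with `h`, so its kernel is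
invariant, hence zero unless the element is. Thus `F[h]` is a finite-dimensional domain, hence a
field, and `minpoly h`, being the minimal polynomial of an element of a domain, is irreducible.
-/

namespace LinearEquiv

variable {K V : Type*} [Field K] [AddCommGroup V] [Module K V] [FiniteDimensional K V]

theorem symm_mem_invtSubmodule {e : V ≃ₗ[K] V} {W : Submodule K V}
    (hW : W ∈ Module.End.invtSubmodule (e : Module.End K V)) :
    W ∈ Module.End.invtSubmodule (e.symm : Module.End K V) := by
  rw [Module.End.mem_invtSubmodule_symm_iff_le_map]
  refine (Submodule.eq_of_le_of_finrank_le
    ((Module.End.mem_invtSubmodule_iff_map_le _).1 hW) ?_).ge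
  rw [e.finrank_map_eq]

end LinearEquiv

namespace LinearMap.BilinForm

open Module.End

variable {K V : Type*} [Field K] [AddCommGroup V] [Module K V] {B : LinearMap.BilinForm K V}

theorem orthogonal_mem_invtSubmodule_of_isometry [FiniteDimensional K V] {e : V ≃ₗ[K] V}
    (he : ∀ v w, B (e v) (e w) = B v w) {W : Submodule K V}
    (hW : W ∈ invtSubmodule (e : Module.End K V)) :
    B.orthogonal W ∈ invtSubmodule (e : Module.End K V) := by
  intro v hv n hn
  change B n (e v) = 0
  rw [← e.apply_symm_apply n, he]
  exact hv _ (e.symm_mem_invtSubmodule hW hn)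

theorem eq_zero_of_mem_of_disjoint_orthogonal (hB : B.IsRefl) {W : Submodule K V}
    (hW : Disjoint W (B.orthogonal W)) {v : V} (hv : v ∈ W) (hv₀ : ∀ w ∈ W, B v w = 0) :
    v = 0 :=
  hW.le_bot ⟨hv, fun w hw => hB v w (hv₀ w hw)⟩

theorem eq_bot_or_eq_top_of_isometry [FiniteDimensional K V] (hB : B.IsRefl)
    (hB₀ : B.SeparatingLeft) {e : V ≃ₗ[K] V} (he : ∀ v w, B (e v) (e w) = B v w)
    (hnoiso : ∀ W ∈ invtSubmodule (e : Module.End K V),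
      (∀ w ∈ W, ∀ w' ∈ W, B w w' = 0) → W = ⊥)
    (hnodec : ∀ W₁ W₂ : Submodule K V, IsCompl W₁ W₂ →
      (∀ v₁ ∈ W₁, ∀ v₂ ∈ W₂, B v₁ v₂ = 0) →
      W₁ ∈ invtSubmodule (e : Module.End K V) →
      W₂ ∈ invtSubmodule (e : Module.End K V) →
      (∀ v ∈ W₁, (∀ w ∈ W₁, B v w = 0) → v = 0) →
      (∀ v ∈ W₂, (∀ w ∈ W₂, B v w = 0) → v = 0) →
      W₁ = ⊥ ∨ W₂ = ⊥)
    {W : Submodule K V} (hW : W ∈ invtSubmodule (e : Module.End K V)) : W = ⊥ ∨ W = ⊤ := by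
  have hW' := orthogonal_mem_invtSubmodule_of_isometry he hW
  have hdisj : Disjoint W (B.orthogonal W) := disjoint_iff.2 <|
    hnoiso _ (invtSubmodule.inf_mem hW hW') fun w hw w' hw' => hw'.2 w hw.1
  have hdisj' : Disjoint (B.orthogonal W) (B.orthogonal (B.orthogonal W)) := by
    rw [orthogonal_orthogonal (hB.nondegenerate_iff_separatingLeft.2 hB₀) hB]
    exact hdisj.symm
  have hcompl := (isCompl_orthogonal_iff_disjoint hB).2 hdisj
  refine (hnodec W _ hcompl (fun v₁ h₁ v₂ h₂ => h₂ v₁ h₁) hW hW'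
    (fun _ => eq_zero_of_mem_of_disjoint_orthogonal hB hdisj)
    (fun _ => eq_zero_of_mem_of_disjoint_orthogonal hB hdisj')).imp_right
    fun (h : B.orthogonal W = ⊥) => eq_top_of_isCompl_bot (h ▸ hcompl)

end LinearMap.BilinForm

namespace Module.End

variable {K V : Type*} [Field K] [AddCommGroup V] [Module K V] {f g : Module.End K V}

theorem ker_mem_invtSubmodule_of_commute (h : Commute f g) :
    LinearMap.ker g ∈ f.invtSubmodule := by
  intro v hv
  change g (f v) = 0
  rw [← mul_apply, ← h.eq, mul_apply, LinearMap.mem_ker.1 hv, map_zero]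

theorem injective_of_mem_adjoin_singleton (hf : ∀ W ∈ f.invtSubmodule, W = ⊥ ∨ W = ⊤)
    (hg : g ∈ Algebra.adjoin K {f}) (hg₀ : g ≠ 0) : Function.Injective g := by
  rw [← LinearMap.ker_eq_bot]
  refine (hf _ (ker_mem_invtSubmodule_of_commute
    (Algebra.commute_of_mem_adjoin_self hg))).resolve_right fun h => hg₀ ?_
  exact LinearMap.ker_eq_top.1 h

theorem isDomain_adjoin_singleton [Nontrivial V]
    (hf : ∀ W ∈ f.invtSubmodule, W = ⊥ ∨ W = ⊤) : IsDomain (Algebra.adjoin K {f}) := by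
  have : NoZeroDivisors (Algebra.adjoin K {f}) := by
    refine ⟨fun {a b} hab =>
      or_iff_not_imp_left.2 fun ha => Subtype.ext (LinearMap.ext fun v => ?_)⟩
    have ha' : (a : Module.End K V) ≠ 0 := fun h => ha (Subtype.ext h)
    refine injective_of_mem_adjoin_singleton hf a.2 ha' ?_
    simpa using LinearMap.congr_fun (congrArg Subtype.val hab) v
  exact NoZeroDivisors.to_isDomain _

theorem isField_adjoin_singleton [FiniteDimensional K V] [Nontrivial V]
    (hf : ∀ W ∈ f.invtSubmodule, W = ⊥ ∨ W = ⊤) :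
    IsField (Algebra.adjoin K {f}) :=
  have := isDomain_adjoin_singleton hf
  have : IsArtinianRing (Algebra.adjoin K {f}) := isArtinian_of_tower K inferInstance
  IsArtinianRing.isField_of_isDomain _

theorem irreducible_minpoly [FiniteDimensional K V] [Nontrivial V]
    (hf : ∀ W ∈ f.invtSubmodule, W = ⊥ ∨ W = ⊤) : Irreducible (minpoly K f) := by
  have := isDomain_adjoin_singleton hf
  have hmin := minpoly.algHom_eq (Algebra.adjoin K {f}).val Subtype.val_injective
    ⟨f, Algebra.self_mem_adjoin_singleton K f⟩
  exact hmin ▸ minpoly.irreducible (Algebra.IsIntegral.isIntegral _)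

end Module.End

theorem irreducible_isometry_semisimple_field_general {F V : Type*} [Field F]
    [AddCommGroup V] [Module F V] [FiniteDimensional F V]
    [Nontrivial V]
    (B : V →ₗ[F] V →ₗ[F] F) (halt : ∀ v, B v v = 0)
    (hnd : ∀ v : V, (∀ w : V, B v w = 0) → v = 0)
    (h : V ≃ₗ[F] V) (hiso : ∀ v w : V, B (h v) (h w) = B v w)
    (hnoiso : ∀ W : Submodule F V, (∀ w ∈ W, h w ∈ W) →
      (∀ w ∈ W, ∀ w' ∈ W, B w w' = 0) → W = ⊥)
    (hnodec : ∀ V₁ V₂ : Submodule F V, IsCompl V₁ V₂ →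
      (∀ v₁ ∈ V₁, ∀ v₂ ∈ V₂, B v₁ v₂ = 0) →
      (∀ w ∈ V₁, h w ∈ V₁) → (∀ w ∈ V₂, h w ∈ V₂) →
      (∀ v ∈ V₁, (∀ w ∈ V₁, B v w = 0) → v = 0) →
      (∀ v ∈ V₂, (∀ w ∈ V₂, B v w = 0) → v = 0) →
      V₁ = ⊥ ∨ V₂ = ⊥) :
    Squarefree (minpoly F (h : V →ₗ[F] V)) ∧
      IsField (Algebra.adjoin F ({(h : V →ₗ[F] V)} : Set (Module.End F V))) := by
  have hrefl : B.IsRefl := LinearMap.BilinForm.IsAlt.isRefl halt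
  have hirred : ∀ W ∈ Module.End.invtSubmodule (h : Module.End F V), W = ⊥ ∨ W = ⊤ :=
    fun _ => LinearMap.BilinForm.eq_bot_or_eq_top_of_isometry hrefl hnd hiso hnoiso hnodec
  exact ⟨(Module.End.irreducible_minpoly hirred).squarefree,
    Module.End.isField_adjoin_singleton hirred⟩

/-- Let `V` be a finite-dimensional symplectic vector space over a finite field `F` of odd
characteristic and `h` an isometry of `V`. If `h` stabilizes no nonzero isotropic subspace of
`V` and stabilizes no nontrivial orthogonal direct-sum decomposition `V = V₁ ⊕ V₂` into
symplectic subspaces, then `h` is semisimple (squarefree minimal polynomial) and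
`F[h] ⊆ End_F(V)` is a field. -/
theorem irreducible_isometry_semisimple_field {F V : Type*} [Field F] [Finite F]
    (hch : ringChar F ≠ 2) [AddCommGroup V] [Module F V] [FiniteDimensional F V]
    [Nontrivial V]
    (B : V →ₗ[F] V →ₗ[F] F) (halt : ∀ v, B v v = 0)
    (hnd : ∀ v : V, (∀ w : V, B v w = 0) → v = 0)
    (h : V ≃ₗ[F] V) (hiso : ∀ v w : V, B (h v) (h w) = B v w)
    (hnoiso : ∀ W : Submodule F V, (∀ w ∈ W, h w ∈ W) →
      (∀ w ∈ W, ∀ w' ∈ W, B w w' = 0) → W = ⊥)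
    (hnodec : ∀ V₁ V₂ : Submodule F V, IsCompl V₁ V₂ →
      (∀ v₁ ∈ V₁, ∀ v₂ ∈ V₂, B v₁ v₂ = 0) →
      (∀ w ∈ V₁, h w ∈ V₁) → (∀ w ∈ V₂, h w ∈ V₂) →
      (∀ v ∈ V₁, (∀ w ∈ V₁, B v w = 0) → v = 0) →
      (∀ v ∈ V₂, (∀ w ∈ V₂, B v w = 0) → v = 0) →
      V₁ = ⊥ ∨ V₂ = ⊥) :
    Squarefree (minpoly F (h : V →ₗ[F] V)) ∧
      IsField (Algebra.adjoin F ({(h : V →ₗ[F] V)} : Set (Module.End F V))) :=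
  irreducible_isometry_semisimple_field_general B halt hnd h hiso hnoiso hnodec
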